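/- For any \varepsilon > 0, positive integers L and p, q with p + q \le L, and any (p,q)-cliff sequence l \in \RR^L, there exists C > 0 such that the sequence C\cdot l satisfies softmax(C\cdot l)_i \le \varepsilon for every index i in [1, p-1] \cup [p+q+1, L]. -/
import Mathlib


open Finset Real

/-- `l` (indexed `1, …, L`) is a `(p,q)`-cliff sequence: increasing up to `p`,
a plateau on `p+1, …, p+q` between `(l_{p-1}+l_p)/2` and `l_p`, and entries below `l_1`
after `p+q`. -/
def IsCliffSeq (L p q : ℕ) (l : ℕ → ℝ) : Prop :=
  (∀ i, 1 ≤ i → i < p → l i < l (i + 1)) ∧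
  (∀ j, p + 1 ≤ j → j ≤ p + q → (l (p - 1) + l p) / 2 ≤ l j ∧ l j ≤ l p) ∧
  (∀ i, p + q < i → i ≤ L → l i < l 1)

/-- The softmax (over indices `1, …, L`) of a sequence. -/
noncomputable def softmaxSeq (L : ℕ) (l : ℕ → ℝ) (i : ℕ) : ℝ :=
  Real.exp (l i) / ∑ j ∈ Finset.Icc 1 L, Real.exp (l j)

lemma cliff_mono {p : ℕ} {l : ℕ → ℝ} (h : ∀ i, 1 ≤ i → i < p → l i < l (i + 1)) :
    ∀ a b, 1 ≤ a → a < b → b ≤ p → l a < l b := by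
  intro a b ha hab hbp
  induction b with
  | zero => omega
  | succ n ih =>
    rcases Nat.lt_or_ge a n with h1 | h1
    · exact lt_trans (ih h1 (by omega)) (h n (by omega) (by omega))
    · have : a = n := by omega
      subst this
      exact h a ha (by omega)

/-- For any `ε > 0` and any `(p,q)`-cliff sequence `l`, there is a scaling `C > 0` such
that the softmax of `C • l` is at most `ε` on all indices in `[1, p-1] ∪ [p+q+1, L]`. -/
theorem cliff_softmax_small (ε : ℝ) (hε : 0 < ε) (L p q : ℕ) (hp : 0 < p) (hq : 0 < q)
    (hL : p + q ≤ L) (l : ℕ → ℝ) (hl : IsCliffSeq L p q l) :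
    ∃ C : ℝ, 0 < C ∧ ∀ i, ((1 ≤ i ∧ i ≤ p - 1) ∨ (p + q + 1 ≤ i ∧ i ≤ L)) →
      softmaxSeq L (fun j => C * l j) i ≤ ε := by
  obtain ⟨h1, h2, h3⟩ := hl
  set S : Finset ℕ := Finset.Icc 1 (p - 1) ∪ Finset.Icc (p + q + 1) L with hS
  -- every index in S has value strictly below l p
  have key : ∀ i ∈ S, l i < l p := by
    intro i hi
    rw [hS, Finset.mem_union, Finset.mem_Icc, Finset.mem_Icc] at hi
    rcases hi with ⟨hi1, hi2⟩ | ⟨hi1, hi2⟩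
    · exact cliff_mono h1 i p hi1 (by omega) le_rfl
    · have hi3 : l i < l 1 := h3 i (by omega) hi2
      rcases Nat.eq_or_lt_of_le hp with hp1 | hp1
      · subst hp1; simpa using hi3
      · exact lt_trans hi3 (cliff_mono h1 1 p le_rfl hp1 le_rfl)
  set T : Finset ℝ := insert (1 : ℝ) (S.image fun i => l p - l i) with hT
  have hTne : T.Nonempty := ⟨1, by simp [hT]⟩
  set m : ℝ := T.min' hTne with hm
  have hmpos : 0 < m := by
    apply (Finset.lt_min'_iff T hTne).2
    intro y hy
    rw [hT, Finset.mem_insert] at hy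
    rcases hy with rfl | hy
    · norm_num
    · obtain ⟨i, hi, rfl⟩ := Finset.mem_image.1 hy
      have := key i hi
      linarith
  set C : ℝ := max 1 ((|Real.log ε| + 1) / m) with hC
  have hCpos : (0 : ℝ) < C := lt_of_lt_of_le one_pos (le_max_left _ _)
  refine ⟨C, hCpos, ?_⟩
  intro i hi
  have hiS : i ∈ S := by
    rw [hS, Finset.mem_union, Finset.mem_Icc, Finset.mem_Icc]
    exact hi
  have hmi : m ≤ l p - l i := by
    apply Finset.min'_le
    rw [hT, Finset.mem_insert]
    exact Or.inr (Finset.mem_image.2 ⟨i, hiS, rfl⟩)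
  -- bound C*m ≥ -log ε
  have hCm : -Real.log ε ≤ C * m := by
    have h4 : (|Real.log ε| + 1) / m ≤ C := le_max_right _ _
    have h5 : |Real.log ε| + 1 ≤ C * m := by
      rw [div_le_iff₀ hmpos] at h4; linarith
    have := abs_nonneg (Real.log ε)
    have := neg_abs_le (Real.log ε)
    linarith
  have hexp : Real.exp (-(C * (l p - l i))) ≤ ε := by
    have h6 : -(C * (l p - l i)) ≤ Real.log ε := by
      have : C * m ≤ C * (l p - l i) :=
        mul_le_mul_of_nonneg_left hmi hCpos.le
      linarith
    calc Real.exp (-(C * (l p - l i))) ≤ Real.exp (Real.log ε) := Real.exp_le_exp.2 h6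
      _ = ε := Real.exp_log hε
  -- denominator bound
  have hpmem : p ∈ Finset.Icc 1 L := Finset.mem_Icc.2 ⟨hp, by omega⟩
  have hden : Real.exp (C * l p) ≤ ∑ j ∈ Finset.Icc 1 L, Real.exp (C * l j) :=
    Finset.single_le_sum (f := fun j => Real.exp (C * l j)) (fun j _ => (Real.exp_pos _).le) hpmem
  have hnum : (0 : ℝ) ≤ Real.exp (C * l i) := (Real.exp_pos _).le
  rw [softmaxSeq]
  calc Real.exp (C * l i) / ∑ j ∈ Finset.Icc 1 L, Real.exp (C * l j)
      ≤ Real.exp (C * l i) / Real.exp (C * l p) := by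
        exact div_le_div_of_nonneg_left hnum (Real.exp_pos _) hden
    _ = Real.exp (-(C * (l p - l i))) := by
        rw [← Real.exp_sub]; ring_nf
    _ ≤ ε := hexp
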